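/- Let ((p̃_i, s_i; 1−p̃_i, t_i))_{i=1}^N be a weak Helstrom family with Helstrom ratio p (so p̃_i = p_i/p and p̃_i s_i + (1−p̃_i) t_i = s for all i). If there exists an observable O = (e_1,...,e_N) such that ẽ_i(t_i) = 0 for every i, then P_succ(O) = P_succ = p; in particular the family is a Helstrom family and O is optimal. -/

import Mathlib

/-! For any observable with a continuous affine extension `φ` to `S̃ = closure S`, affinity along
the decompositions `sref = (pᵢ/ρ) sᵢ + (1 - pᵢ/ρ) tᵢ` and `∑ φᵢ(sref) = 1` give
`∑ pᵢ φᵢ(sᵢ) = ρ - ∑ (ρ - pᵢ) φᵢ(tᵢ)`. The correction term is nonnegative, and it vanishes for the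
given observable. Every observable has such an extension: an affine functional on `S` is a linear
functional plus a constant, the linear part is bounded on `S` and hence continuous on `V`, and it
extends by density of `V`. -/

/-- An affine functional on a convex subset `A` of a real vector space. -/
def IsAffineOn {E : Type*} [AddCommGroup E] [Module ℝ E] (A : Set E) (f : E → ℝ) : Prop :=
  ∀ x ∈ A, ∀ y ∈ A, ∀ l : ℝ, 0 ≤ l → l ≤ 1 →
    f (l • x + (1 - l) • y) = l * f x + (1 - l) * f y

/-- A virtual effect: a continuous affine functional on `A` with values in `[0,1]`. -/
def IsVirtualEffect {E : Type*} [AddCommGroup E] [Module ℝ E] [TopologicalSpace E]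
    (A : Set E) (f : E → ℝ) : Prop :=
  ContinuousOn f A ∧ IsAffineOn A f ∧ ∀ x ∈ A, f x ∈ Set.Icc (0 : ℝ) 1

/-- An `N`-valued observable on `A`: a tuple of effects summing to `1` on `A`. -/
def IsObservableOn {E : Type*} [AddCommGroup E] [Module ℝ E] (A : Set E) {N : ℕ}
    (e : Fin N → E → ℝ) : Prop :=
  (∀ i, IsAffineOn A (e i) ∧ ∀ x ∈ A, e i x ∈ Set.Icc (0 : ℝ) 1) ∧
    ∀ x ∈ A, (∑ i, e i x) = 1

open Set

theorem Submodule.exists_linearMap_apply_fst_eq_snd_of_notMem {K E : Type*} [Field K]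
    [AddCommGroup E] [Module K E] {Γ : Submodule K (E × K)} (hΓ : ((0 : E), (1 : K)) ∉ Γ) :
    ∃ F : E →ₗ[K] K, ∀ q ∈ Γ, F q.1 = q.2 := by
  obtain ⟨Λ, hΛΓ, hΛ⟩ := LinearMap.exists_extend_of_notMem (0 : Γ →ₗ[K] K) hΓ 1
  refine ⟨-(Λ ∘ₗ LinearMap.inl K E K), fun q hq => ?_⟩
  have hq0 : Λ q = 0 := by simpa using congr($hΛΓ ⟨q, hq⟩)
  have hsplit : q = (q.1, 0) + q.2 • ((0 : E), (1 : K)) := by ext <;> simp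
  rw [hsplit, map_add, map_smul, hΛ, smul_eq_mul, mul_one] at hq0
  simp only [LinearMap.neg_apply, LinearMap.comp_apply, LinearMap.inl_apply]
  linear_combination -hq0

namespace IsAffineOn

variable {X : Type*} [AddCommGroup X] [Module ℝ X] {S : Set X} {f : X → ℝ}

theorem exists_smul_chord_eq_add (hS : Convex ℝ S) (hf : IsAffineOn S f) {r₁ r₂ : ℝ}
    (hr₁ : 0 ≤ r₁) (hr₂ : 0 ≤ r₂) {a₁ b₁ a₂ b₂ : X} (ha₁ : a₁ ∈ S) (hb₁ : b₁ ∈ S)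
    (ha₂ : a₂ ∈ S) (hb₂ : b₂ ∈ S) :
    ∃ r : ℝ, 0 ≤ r ∧ ∃ a ∈ S, ∃ b ∈ S,
      r₁ • (a₁ - b₁, f a₁ - f b₁) + r₂ • (a₂ - b₂, f a₂ - f b₂) = r • (a - b, f a - f b) := by
  rcases (add_nonneg hr₁ hr₂).eq_or_lt with hm | hm
  · obtain ⟨rfl, rfl⟩ : r₁ = 0 ∧ r₂ = 0 := ⟨by linarith, by linarith⟩
    exact ⟨0, le_rfl, a₁, ha₁, b₁, hb₁, by simp⟩
  set l := r₁ / (r₁ + r₂)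
  have hl₀ : 0 ≤ l := div_nonneg hr₁ hm.le
  have hl₁ : l ≤ 1 := (div_le_one hm).2 (by linarith)
  have hl₁' : 0 ≤ 1 - l := by linarith
  have hr₁l : (r₁ + r₂) * l = r₁ := mul_div_cancel₀ r₁ hm.ne'
  have hr₂l : (r₁ + r₂) * (1 - l) = r₂ := by rw [mul_sub, mul_one, hr₁l]; ring
  refine ⟨r₁ + r₂, hm.le, l • a₁ + (1 - l) • a₂, hS ha₁ ha₂ hl₀ hl₁' (by ring),
    l • b₁ + (1 - l) • b₂, hS hb₁ hb₂ hl₀ hl₁' (by ring), ?_⟩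
  rw [hf a₁ ha₁ a₂ ha₂ l hl₀ hl₁, hf b₁ hb₁ b₂ hb₂ l hl₀ hl₁]
  ext
  · simp only [Prod.fst_add, Prod.smul_fst]
    linear_combination (norm := module) -(hr₁l • (a₁ - b₁)) - hr₂l • (a₂ - b₂)
  · simp only [Prod.snd_add, Prod.smul_snd, smul_eq_mul]
    linear_combination -((f a₁ - f b₁) * hr₁l) - (f a₂ - f b₂) * hr₂l

theorem exists_smul_chord_of_mem_span (hS : Convex ℝ S) (hf : IsAffineOn S f)
    (hne : S.Nonempty) {q : X × ℝ}
    (hq : q ∈ Submodule.span ℝ (image2 (fun a b => (a - b, f a - f b)) S S)) :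
    ∃ r : ℝ, 0 ≤ r ∧ ∃ a ∈ S, ∃ b ∈ S, q = r • (a - b, f a - f b) := by
  induction hq using Submodule.span_induction with
  | mem q hq =>
    obtain ⟨a, ha, b, hb, rfl⟩ := hq
    exact ⟨1, zero_le_one, a, ha, b, hb, (one_smul ℝ _).symm⟩
  | zero =>
    obtain ⟨x₀, hx₀⟩ := hne
    exact ⟨0, le_rfl, x₀, hx₀, x₀, hx₀, (zero_smul ℝ _).symm⟩
  | add _ _ _ _ h₁ h₂ =>
    obtain ⟨r₁, hr₁, a₁, ha₁, b₁, hb₁, rfl⟩ := h₁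
    obtain ⟨r₂, hr₂, a₂, ha₂, b₂, hb₂, rfl⟩ := h₂
    exact exists_smul_chord_eq_add hS hf hr₁ hr₂ ha₁ hb₁ ha₂ hb₂
  | smul c _ _ h =>
    obtain ⟨r, hr, a, ha, b, hb, rfl⟩ := h
    rcases le_or_gt 0 c with hc | hc
    · exact ⟨c * r, mul_nonneg hc hr, a, ha, b, hb, smul_smul c r _⟩
    · refine ⟨-(c * r), by nlinarith, b, hb, a, ha, ?_⟩
      ext
      · simp only [Prod.smul_fst]
        module
      · simp only [Prod.smul_snd, smul_eq_mul]
        ring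

theorem exists_linearMap_add_const (hS : Convex ℝ S) (hf : IsAffineOn S f) :
    ∃ (F : X →ₗ[ℝ] ℝ) (c : ℝ), ∀ x ∈ S, f x = F x + c := by
  rcases S.eq_empty_or_nonempty with rfl | hne
  · exact ⟨0, 0, by simp⟩
  -- `Γ` is the graph of the linear part of `f`: it misses `(0, 1)` because each of its elements
  -- is a nonnegative multiple of a single chord.
  set Γ := Submodule.span ℝ (image2 (fun a b => (a - b, f a - f b)) S S)
  have hΓ : ((0 : X), (1 : ℝ)) ∉ Γ := by
    intro h
    obtain ⟨r, -, a, -, b, -, hr⟩ := exists_smul_chord_of_mem_span hS hf hne h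
    simp only [Prod.ext_iff, Prod.smul_mk, smul_eq_mul] at hr
    rcases smul_eq_zero.1 hr.1.symm with rfl | hab
    · simp at hr
    · simp [sub_eq_zero.1 hab] at hr
  obtain ⟨F, hF⟩ := Submodule.exists_linearMap_apply_fst_eq_snd_of_notMem hΓ
  obtain ⟨x₀, hx₀⟩ := hne
  refine ⟨F, f x₀ - F x₀, fun x hx => ?_⟩
  have hchord := hF _ (Submodule.subset_span (mem_image2_of_mem hx hx₀))
  rw [map_sub] at hchord
  linarith

end IsAffineOn

theorem Submodule.exists_continuousLinearMap_extend_of_dense {E : Type*} [AddCommGroup E]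
    [Module ℝ E] [TopologicalSpace E] [IsTopologicalAddGroup E] [ContinuousConstSMul ℝ E]
    {V : Submodule ℝ E} (hV : Dense (V : Set E)) (F : V →L[ℝ] ℝ) :
    ∃ Φ : E →L[ℝ] ℝ, ∀ v : V, Φ v = F v := by
  let _ : UniformSpace E := IsTopologicalAddGroup.rightUniformSpace E
  have : IsUniformAddGroup E := isUniformAddGroup_of_addCommGroup
  have hind : IsUniformInducing V.subtypeL := isUniformEmbedding_subtype_val.isUniformInducing
  have : IsUniformAddGroup V := hind.isUniformAddGroup V.subtypeL
  exact ⟨F.extend V.subtypeL, F.extend_eq hV.denseRange_val hind⟩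

section Extension

variable {X : Type*} [AddCommGroup X] [Module ℝ X] [TopologicalSpace X]
  [IsTopologicalAddGroup X] [ContinuousConstSMul ℝ X] {S : Set X} {V : Submodule ℝ X}

theorem IsAffineOn.exists_continuousLinearMap_add_const (hS : Convex ℝ S) {f : X → ℝ}
    (hf : IsAffineOn S f) (hbdd : Bornology.IsBounded (f '' S)) (hSV : S ⊆ V)
    (hVdense : Dense (V : Set X))
    (hVcont : ∀ F : V →ₗ[ℝ] ℝ, Bornology.IsBounded (F '' (((↑) : V → X) ⁻¹' S)) → Continuous F) :
    ∃ (Φ : X →L[ℝ] ℝ) (c : ℝ), ∀ x ∈ S, f x = Φ x + c := by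
  obtain ⟨F, c, hF⟩ := hf.exists_linearMap_add_const hS
  obtain ⟨C, hC⟩ := isBounded_iff_forall_norm_le.1 hbdd
  have hFV : Bornology.IsBounded ((F ∘ₗ V.subtype) '' (((↑) : V → X) ⁻¹' S)) := by
    refine isBounded_iff_forall_norm_le.2 ⟨C + ‖c‖, ?_⟩
    rintro _ ⟨v, hv, rfl⟩
    calc ‖F v‖ = ‖f v - c‖ := by rw [hF v hv, add_sub_cancel_right]
      _ ≤ C + ‖c‖ := (norm_sub_le _ _).trans (by gcongr; exact hC _ (mem_image_of_mem f hv))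
  obtain ⟨Φ, hΦ⟩ := Submodule.exists_continuousLinearMap_extend_of_dense hVdense
    ⟨F ∘ₗ V.subtype, hVcont _ hFV⟩
  exact ⟨Φ, c, fun x hx => by rw [hF x hx, hΦ ⟨x, hSV hx⟩]; rfl⟩

theorem IsObservableOn.exists_virtualEffect_extension {N : ℕ} {e : Fin N → X → ℝ}
    (he : IsObservableOn S e) (hS : Convex ℝ S) (hSV : S ⊆ V) (hVdense : Dense (V : Set X))
    (hVcont : ∀ F : V →ₗ[ℝ] ℝ, Bornology.IsBounded (F '' (((↑) : V → X) ⁻¹' S)) → Continuous F) :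
    ∃ φ : Fin N → X → ℝ, ∀ i, IsVirtualEffect (closure S) (φ i) ∧ EqOn (e i) (φ i) S := by
  have hbdd i : Bornology.IsBounded (e i '' S) :=
    Metric.isBounded_Icc (0 : ℝ) 1 |>.subset (image_subset_iff.2 (he.1 i).2)
  choose Φ c hΦ using fun i =>
    (he.1 i).1.exists_continuousLinearMap_add_const hS (hbdd i) hSV hVdense hVcont
  refine ⟨fun i x => Φ i x + c i, fun i => ⟨⟨by fun_prop, ?_, ?_⟩, hΦ i⟩⟩
  · intro x _ y _ l _ _
    simp only [map_add, map_smul, smul_eq_mul]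
    ring
  · have hclosed : IsClosed {x | Φ i x + c i ∈ Icc (0 : ℝ) 1} :=
      isClosed_Icc.preimage (by fun_prop)
    exact closure_minimal (fun x hx => show Φ i x + c i ∈ Icc (0 : ℝ) 1 from
      hΦ i x hx ▸ (he.1 i).2 x hx) hclosed

end Extension

section HelstromFamily

variable {X : Type*} [AddCommGroup X] [Module ℝ X]

theorem IsAffineOn.mul_apply_div_smul_add {A : Set X} {φ : X → ℝ} (hφ : IsAffineOn A φ)
    {x y : X} (hx : x ∈ A) (hy : y ∈ A) {p ρ : ℝ} (hp : 0 < p) (hpρ : p ≤ ρ) :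
    ρ * φ ((p / ρ) • x + (1 - p / ρ) • y) = p * φ x + (ρ - p) * φ y := by
  have hρ : 0 < ρ := hp.trans_le hpρ
  rw [hφ x hx y hy _ (div_nonneg hp.le hρ.le) ((div_le_one hρ).2 hpρ)]
  field_simp

theorem IsObservableOn.sum_mul_apply_eq_sub [TopologicalSpace X] {S : Set X} {N : ℕ}
    {e φ : Fin N → X → ℝ} (he : IsObservableOn S e)
    (hφ : ∀ i, IsVirtualEffect (closure S) (φ i)) (hext : ∀ i, EqOn (e i) (φ i) S)
    {s t : Fin N → X} {sref : X} {p : Fin N → ℝ} {ρ : ℝ} (hs : ∀ i, s i ∈ S)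
    (ht : ∀ i, t i ∈ closure S) (hsref : sref ∈ closure S) (hp : ∀ i, 0 < p i)
    (hρ : ∀ i, p i ≤ ρ) (hfam : ∀ i, (p i / ρ) • s i + (1 - p i / ρ) • t i = sref) :
    ∑ i, p i * e i (s i) = ρ - ∑ i, (ρ - p i) * φ i (t i) := by
  have hsum : ∑ i, φ i sref = 1 := by
    have h : EqOn (fun x => ∑ i, φ i x) (fun _ => 1) S := fun x hx => by
      simp only [← he.2 x hx, hext _ hx]
    exact h.of_subset_closure (continuousOn_finsetSum _ fun i _ => (hφ i).1)
      continuousOn_const subset_closure subset_rfl hsref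
  calc ∑ i, p i * e i (s i) = ∑ i, (ρ * φ i sref - (ρ - p i) * φ i (t i)) := by
        refine Finset.sum_congr rfl fun i _ => ?_
        rw [hext i (hs i), ← hfam i, (hφ i).2.1.mul_apply_div_smul_add (subset_closure (hs i))
          (ht i) (hp i) (hρ i)]
        ring
    _ = ρ - ∑ i, (ρ - p i) * φ i (t i) := by
        rw [Finset.sum_sub_distrib, ← Finset.mul_sum, hsum, mul_one]

end HelstromFamily

theorem helstrom_sufficient_general {X : Type*} [AddCommGroup X] [Module ℝ X]
    [TopologicalSpace X] [IsTopologicalAddGroup X] [ContinuousSMul ℝ X]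
    (S Stilde : Set X) (hS : Convex ℝ S)
    (hcl : closure S = Stilde)
    (V : Submodule ℝ X) (hSV : S ⊆ (V : Set X)) (hVdense : Dense (V : Set X))
    (hVcont : ∀ f : V →ₗ[ℝ] ℝ,
      Bornology.IsBounded (f '' (((↑) : V → X) ⁻¹' S)) → Continuous f)
    (N : ℕ) (s : Fin N → X) (hs : ∀ i, s i ∈ S)
    (p : Fin N → ℝ) (hp : ∀ i, 0 < p i)
    (ρ : ℝ) (hρ : ∀ i, p i ≤ ρ)
    (t : Fin N → X) (htS : ∀ i, t i ∈ Stilde)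
    (sref : X) (hsref : sref ∈ Stilde)
    (hfam : ∀ i, (p i / ρ) • s i + (1 - p i / ρ) • t i = sref)
    (e : Fin N → X → ℝ) (hobs : IsObservableOn S e)
    (g : Fin N → X → ℝ) (hg : ∀ i, IsVirtualEffect Stilde (g i))
    (hext : ∀ i, Set.EqOn (e i) (g i) S)
    (hzero : ∀ i, g i (t i) = 0) :
    (∑ i, p i * e i (s i)) = ρ ∧
      ∀ e' : Fin N → X → ℝ, IsObservableOn S e' → (∑ i, p i * e' i (s i)) ≤ ρ := by
  subst hcl
  refine ⟨?_, fun e' he' => ?_⟩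
  · rw [hobs.sum_mul_apply_eq_sub hg hext hs htS hsref hp hρ hfam]
    simp [hzero]
  · obtain ⟨φ, hφ⟩ := he'.exists_virtualEffect_extension hS hSV hVdense hVcont
    rw [he'.sum_mul_apply_eq_sub (fun i => (hφ i).1) (fun i => (hφ i).2) hs htS hsref hp hρ hfam]
    have hnonneg : 0 ≤ ∑ i, (ρ - p i) * φ i (t i) := Finset.sum_nonneg fun i _ =>
      mul_nonneg (sub_nonneg.2 (hρ i)) ((hφ i).1.2.2 _ (htS i)).1
    linarith

/-- Sufficient condition for a weak Helstrom family to be a Helstrom family: if an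
observable `(e i)` has continuous affine extensions `(g i)` to `S̃` with
`g i (t i) = 0` for every `i`, then its success probability equals `ρ` and is optimal:
`P_succ(O) = P_succ = ρ`. -/
theorem helstrom_sufficient {X : Type*} [AddCommGroup X] [Module ℝ X]
    [TopologicalSpace X] [IsTopologicalAddGroup X] [ContinuousSMul ℝ X]
    [LocallyConvexSpace ℝ X] [T2Space X]
    (S Stilde : Set X) (hS : Convex ℝ S) (hSt : Convex ℝ Stilde)
    (hcomp : IsCompact Stilde) (hcl : closure S = Stilde)
    (V : Submodule ℝ X) (hSV : S ⊆ (V : Set X)) (hVdense : Dense (V : Set X))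
    (hVcont : ∀ f : V →ₗ[ℝ] ℝ,
      Bornology.IsBounded (f '' (((↑) : V → X) ⁻¹' S)) → Continuous f)
    (N : ℕ) (s : Fin N → X) (hs : ∀ i, s i ∈ S)
    (p : Fin N → ℝ) (hp : ∀ i, 0 < p i) (hp1 : (∑ i, p i) = 1)
    (ρ : ℝ) (hρ : ∀ i, p i ≤ ρ)
    (t : Fin N → X) (htS : ∀ i, t i ∈ Stilde)
    (sref : X) (hsref : sref ∈ Stilde)
    (hfam : ∀ i, (p i / ρ) • s i + (1 - p i / ρ) • t i = sref)
    (e : Fin N → X → ℝ) (hobs : IsObservableOn S e)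
    (g : Fin N → X → ℝ) (hg : ∀ i, IsVirtualEffect Stilde (g i))
    (hext : ∀ i, Set.EqOn (e i) (g i) S)
    (hzero : ∀ i, g i (t i) = 0) :
    (∑ i, p i * e i (s i)) = ρ ∧
      ∀ e' : Fin N → X → ℝ, IsObservableOn S e' → (∑ i, p i * e' i (s i)) ≤ ρ :=
  helstrom_sufficient_general S Stilde hS hcl V hSV hVdense hVcont N s hs p hp ρ hρ t htS sref hsref
    hfam e hobs g hg hext hzero
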